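/- arXiv:2307.06665 — 2 statements merged into one kernel-verified Lean document; each statement's English description precedes it below -/
import Mathlib

section
/- For a nonzero Schwartz function f on ℝ^d with ‖f‖₂ = 1, the partial derivative of β ↦ ‖|x|^{-β} f‖_{L^p} evaluated at p = 2 and β = 0 equals −∫_{ℝ^d} |f(x)|² log|x| dx. -/
/-!
Write `F(β) = ∫ |f|² ‖x‖^(-2β)`. Since `|log s| ≤ (s^ε + s^(-ε)) / ε`, the `β`-derivative of the
integrand is dominated near `β = 0` by a multiple of `|f|² (‖x‖^(1/2) + ‖x‖^(-1/2))`, which is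
integrable: `‖x‖^(-1/2)` is locally integrable because `d ≥ 1`, and the Schwartz decay of `f`
handles infinity. Differentiating under the integral gives `F'(0) = -2 ∫ |f|² log ‖x‖`, and the
chain rule for `F^(1/2)` together with `F(0) = ‖f‖₂² = 1` yields the claim.
-/

open MeasureTheory Real Filter Set Metric Module

namespace Real

lemma rpow_le_rpow_add_rpow_neg {s t a : ℝ} (hs : 0 < s) (ht : |t| ≤ a) :
    s ^ t ≤ s ^ a + s ^ (-a) := by
  rcases le_or_gt 1 s with hs1 | hs1
  · linarith [rpow_le_rpow_of_exponent_le hs1 (le_of_abs_le ht), rpow_nonneg hs.le (-a)]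
  · linarith [rpow_le_rpow_of_exponent_ge hs hs1.le (neg_le_of_abs_le ht), rpow_nonneg hs.le a]

lemma abs_log_le_rpow_add_rpow_neg_div {s ε : ℝ} (hs : 0 < s) (hε : 0 < ε) :
    |log s| ≤ (s ^ ε + s ^ (-ε)) / ε := by
  have hlog := log_le_rpow_div hs.le hε
  have hlog_inv := log_le_rpow_div (inv_nonneg.2 hs.le) hε
  rw [log_inv, inv_rpow hs.le, ← rpow_neg hs.le] at hlog_inv
  have h₁ : 0 ≤ s ^ ε / ε := div_nonneg (rpow_nonneg hs.le ε) hε.le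
  have h₂ : 0 ≤ s ^ (-ε) / ε := div_nonneg (rpow_nonneg hs.le (-ε)) hε.le
  rw [add_div, abs_le]
  constructor <;> linarith

lemma rpow_mul_abs_log_le {s t ε a : ℝ} (hs : 0 < s) (hε : 0 < ε) (ht : |t| + ε ≤ a) :
    s ^ t * |log s| ≤ 2 * (s ^ a + s ^ (-a)) / ε := by
  have h_plus : s ^ (t + ε) ≤ s ^ a + s ^ (-a) :=
    rpow_le_rpow_add_rpow_neg hs ((abs_add_le t ε).trans (by rwa [abs_of_pos hε]))
  have h_minus : s ^ (t - ε) ≤ s ^ a + s ^ (-a) :=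
    rpow_le_rpow_add_rpow_neg hs ((abs_sub _ _).trans (by rwa [abs_of_pos hε]))
  calc s ^ t * |log s| ≤ s ^ t * ((s ^ ε + s ^ (-ε)) / ε) :=
        mul_le_mul_of_nonneg_left (abs_log_le_rpow_add_rpow_neg_div hs hε) (rpow_nonneg hs.le t)
    _ = (s ^ (t + ε) + s ^ (t - ε)) / ε := by
        rw [rpow_add hs, sub_eq_add_neg, rpow_add hs]; ring
    _ ≤ 2 * (s ^ a + s ^ (-a)) / ε := by gcongr; linarith

end Real

section IntegralMulRpow

variable {α : Type*} [MeasurableSpace α] {μ : Measure α} {g r : α → ℝ} {a t : ℝ}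

theorem hasDerivAt_integral_mul_rpow (hg : AEStronglyMeasurable g μ) (hr : AEMeasurable r μ)
    (hr_pos : ∀ᵐ x ∂μ, 0 < r x) (h_int : Integrable (fun x ↦ g x * r x ^ a) μ)
    (h_int_neg : Integrable (fun x ↦ g x * r x ^ (-a)) μ) (ht : |t| < a) :
    HasDerivAt (fun s ↦ ∫ x, g x * r x ^ s ∂μ) (∫ x, g x * (r x ^ t * log (r x)) ∂μ) t := by
  set ε := (a - |t|) / 2 with hε_def
  have hε : 0 < ε := by linarith
  let bound x := 2 / ε * (‖g x * r x ^ a‖ + ‖g x * r x ^ (-a)‖)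
  have h_meas (s : ℝ) : AEStronglyMeasurable (fun x ↦ g x * r x ^ s) μ :=
    hg.mul (hr.pow_const s).aestronglyMeasurable
  have h_int_t : Integrable (fun x ↦ g x * r x ^ t) μ := by
    refine (h_int.norm.add h_int_neg.norm).mono' (h_meas t) ?_
    filter_upwards [hr_pos] with x hx
    simp only [Pi.add_apply, norm_mul, Real.norm_eq_abs, abs_of_pos (rpow_pos_of_pos hx _)]
    rw [← mul_add]
    exact mul_le_mul_of_nonneg_left (rpow_le_rpow_add_rpow_neg hx ht.le) (abs_nonneg _)
  have h_bound : ∀ᵐ x ∂μ, ∀ s ∈ ball t ε, ‖g x * (r x ^ s * log (r x))‖ ≤ bound x := by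
    filter_upwards [hr_pos] with x hx s hs
    have hs' : |s| + ε ≤ a := by
      have := abs_sub_abs_le_abs_sub s t
      rw [mem_ball, Real.dist_eq] at hs
      linarith
    have := rpow_mul_abs_log_le hx hε hs'
    simp only [bound, norm_mul, Real.norm_eq_abs, abs_of_pos (rpow_pos_of_pos hx _)]
    calc |g x| * (r x ^ s * |log (r x)|) ≤ |g x| * (2 * (r x ^ a + r x ^ (-a)) / ε) :=
          mul_le_mul_of_nonneg_left this (abs_nonneg _)
      _ = _ := by ring
  have h_diff : ∀ᵐ x ∂μ, ∀ s ∈ ball t ε,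
      HasDerivAt (fun s ↦ g x * r x ^ s) (g x * (r x ^ s * log (r x))) s := by
    filter_upwards [hr_pos] with x hx s _
    exact (hasStrictDerivAt_const_rpow hx s).hasDerivAt.const_mul (g x)
  exact (hasDerivAt_integral_of_dominated_loc_of_deriv_le (ball_mem_nhds t hε)
    (Eventually.of_forall h_meas) h_int_t
    (hg.mul ((hr.pow_const t).mul (measurable_log.comp_aemeasurable hr)).aestronglyMeasurable)
    h_bound (((h_int.norm.add h_int_neg.norm).const_mul (2 / ε))) h_diff).2

end IntegralMulRpow

section NormRpow

variable {E F : Type*} [NormedAddCommGroup E] [NormedSpace ℝ E] [FiniteDimensional ℝ E]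
  [MeasurableSpace E] [BorelSpace E] [NormedAddCommGroup F] [NormedSpace ℝ F]
  {μ : Measure E} [μ.IsAddHaarMeasure] {a : ℝ}

lemma locallyIntegrable_norm_rpow (ha : -(finrank ℝ E : ℝ) < a) :
    LocallyIntegrable (fun x : E ↦ ‖x‖ ^ a) μ := by
  rcases le_or_gt 0 a with ha₀ | ha₀
  · exact (continuous_norm.rpow_const fun _ ↦ Or.inr ha₀).locallyIntegrable
  · refine locallyIntegrable_of_norm_le_rpow (C := 1) (α := -a) ?_ (by linarith) ?_
      (measurable_norm.pow_const a).aestronglyMeasurable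
    · exact_mod_cast (show (0 : ℝ) < finrank ℝ E by linarith)
    · exact Eventually.of_forall fun x ↦ by
        rw [neg_neg, one_mul, Real.norm_of_nonneg (rpow_nonneg (norm_nonneg x) a)]

lemma SchwartzMap.integrable_norm_rpow_mul (f : SchwartzMap E F) (ha : -(finrank ℝ E : ℝ) < a) :
    Integrable (fun x ↦ ‖x‖ ^ a * ‖f x‖) μ := by
  have h_meas : AEStronglyMeasurable (fun x ↦ ‖x‖ ^ a * ‖f x‖) μ :=
    ((measurable_norm.pow_const a).mul f.continuous.norm.measurable).aestronglyMeasurable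
  rw [← integrableOn_univ, ← union_compl_self (closedBall (0 : E) 1)]
  refine IntegrableOn.union ?_ ?_
  · exact ((locallyIntegrable_norm_rpow ha).integrableOn_isCompact (isCompact_closedBall 0 1))
      |>.mul_continuousOn f.continuous.norm.continuousOn (isCompact_closedBall 0 1)
  · refine (f.integrable_pow_mul μ ⌈a⌉₊).integrableOn.mono' h_meas.restrict ?_
    filter_upwards [ae_restrict_mem measurableSet_closedBall.compl] with x hx
    have hx₁ : 1 ≤ ‖x‖ := (by simpa using hx : 1 < ‖x‖).le
    rw [Real.norm_of_nonneg (by positivity), ← rpow_natCast]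
    exact mul_le_mul_of_nonneg_right (rpow_le_rpow_of_exponent_le hx₁ (Nat.le_ceil a))
      (norm_nonneg _)

lemma SchwartzMap.integrable_norm_sq_mul_norm_rpow (f : SchwartzMap E F)
    (ha : -(finrank ℝ E : ℝ) < a) : Integrable (fun x ↦ ‖f x‖ ^ 2 * ‖x‖ ^ a) μ := by
  refine ((f.integrable_norm_rpow_mul (μ := μ) ha).bdd_mul (c := SchwartzMap.seminorm ℝ 0 0 f)
    f.continuous.norm.aestronglyMeasurable (Eventually.of_forall fun x ↦ ?_)).congr
    (Eventually.of_forall fun x ↦ by ring)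
  simpa using f.norm_le_seminorm ℝ x

end NormRpow

theorem deriv_in_beta_of_weighted_norm_at_zero_general {d : ℕ} (hd : 0 < d)
    (f : SchwartzMap (EuclideanSpace ℝ (Fin d)) ℂ)
    (hf2 : ∫ x, ‖f x‖ ^ (2 : ℝ) = 1) :
    HasDerivAt (fun β : ℝ => (∫ x, ‖f x‖ ^ (2 : ℝ) * ‖x‖ ^ (-β * 2)) ^ (1 / (2 : ℝ)))
      (-∫ x, ‖f x‖ ^ (2 : ℝ) * Real.log ‖x‖) 0 := by
  simp only [rpow_two] at hf2 ⊢
  have : Nontrivial (EuclideanSpace ℝ (Fin d)) := by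
    apply Module.nontrivial_of_finrank_pos (R := ℝ); simpa using hd
  have h_dim : -(finrank ℝ (EuclideanSpace ℝ (Fin d)) : ℝ) < -(1 / 2) := by
    simp only [finrank_euclideanSpace_fin]
    have : (1 : ℝ) ≤ d := by exact_mod_cast hd
    linarith
  have h_pos : ∀ᵐ x : EuclideanSpace ℝ (Fin d), 0 < ‖x‖ := by
    filter_upwards [Measure.ae_ne volume 0] with x hx using norm_pos_iff.2 hx
  have h_deriv := hasDerivAt_integral_mul_rpow (g := fun x ↦ ‖f x‖ ^ 2) (t := 0)
    (f.continuous.norm.pow 2).aestronglyMeasurable measurable_norm.aemeasurable h_pos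
    (f.integrable_norm_sq_mul_norm_rpow (h_dim.trans (by norm_num)))
    (f.integrable_norm_sq_mul_norm_rpow h_dim) (by norm_num)
  simp only [rpow_zero, one_mul] at h_deriv
  have h_norm := (h_deriv.comp_of_eq 0 ((hasDerivAt_id 0).neg.mul_const 2) (by simp)).rpow_const
    (p := 1 / 2) (Or.inl (by simp [hf2]))
  exact h_norm.congr_deriv (by simp [hf2])

/-- For a nonzero Schwartz function `f` on `ℝ^d` with `‖f‖₂ = 1`, the partial
derivative of `β ↦ ‖|x|^{-β} f‖_{L^p} = (∫ ‖f x‖^p ‖x‖^{-βp} dx)^{1/p}` evaluated at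
`p = 2`, `β = 0` equals `-∫ |f(x)|² log ‖x‖ dx`. -/
theorem deriv_in_beta_of_weighted_norm_at_zero {d : ℕ} (hd : 0 < d)
    (f : SchwartzMap (EuclideanSpace ℝ (Fin d)) ℂ) (hf0 : f ≠ 0)
    (hf2 : ∫ x, ‖f x‖ ^ (2 : ℝ) = 1) :
    HasDerivAt (fun β : ℝ => (∫ x, ‖f x‖ ^ (2 : ℝ) * ‖x‖ ^ (-β * 2)) ^ (1 / (2 : ℝ)))
      (-∫ x, ‖f x‖ ^ (2 : ℝ) * Real.log ‖x‖) 0 :=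
  deriv_in_beta_of_weighted_norm_at_zero_general hd f hf2
end

section
/- For p ≥ 1 and a Schwartz function f on ℝ^d, the derivative of p ↦ ‖f‖_{L^p} equals ‖f‖_p · ( −(1/p²) log(‖f‖_p^p) + (1/p) · (∫ |f|^p log|f| dx) / ‖f‖_p^p ), provided f is not identically zero. -/
open MeasureTheory Real

/-! Differentiate `q ↦ ∫ ‖f‖^q` under the integral sign: the `q`-derivative of the integrand is
`‖f‖^q log ‖f‖`, and for `|q - p| ≤ p/4` it is dominated by `(‖f‖^(p/2) + ‖f‖^(3p/2)) / (p/4)`,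
which is integrable because a Schwartz function lies in every `L^r`. The chain rule for
`F(q)^(1/q)` then gives the formula, the integral being positive since `f ≠ 0` is continuous. -/

namespace Real

theorem hasDerivAt_const_rpow_of_nonneg {a x : ℝ} (ha : 0 ≤ a) (hx : x ≠ 0) :
    HasDerivAt (fun t : ℝ => a ^ t) (a ^ x * log a) x := by
  rcases ha.eq_or_lt with rfl | ha
  · rw [log_zero, mul_zero]
    refine (hasDerivAt_const x (0 : ℝ)).congr_of_eventuallyEq ?_
    filter_upwards [isOpen_ne.mem_nhds hx] with t ht
    exact zero_rpow ht
  · exact (hasStrictDerivAt_const_rpow ha x).hasDerivAt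

theorem abs_rpow_mul_log_le {a p q ε : ℝ} (ha : 0 ≤ a) (hε : 0 < ε) (hq : |q - p| ≤ ε) :
    |a ^ q * log a| ≤ (a ^ (p - 2 * ε) + a ^ (p + 2 * ε)) / ε := by
  obtain ⟨hpq, hqp⟩ := abs_le.mp hq
  rcases ha.eq_or_lt with rfl | ha
  · rw [log_zero, mul_zero, abs_zero]
    positivity
  have hlow := rpow_nonneg ha.le (p - 2 * ε)
  have hhigh := rpow_nonneg ha.le (p + 2 * ε)
  rw [abs_mul, abs_of_pos (rpow_pos_of_pos ha q)]
  rcases le_total a 1 with ha1 | ha1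
  · have hlog : |log a| ≤ a ^ (-ε) / ε := by
      rw [abs_of_nonpos (log_nonpos ha.le ha1), ← log_inv, rpow_neg ha.le, ← inv_rpow ha.le]
      exact log_le_rpow_div (inv_nonneg.mpr ha.le) hε
    calc a ^ q * |log a| ≤ a ^ (p - ε) * (a ^ (-ε) / ε) :=
          mul_le_mul (rpow_le_rpow_of_exponent_ge ha ha1 (by linarith)) hlog (abs_nonneg _)
            (rpow_nonneg ha.le _)
      _ = a ^ (p - 2 * ε) / ε := by rw [mul_div_assoc', ← rpow_add ha]; ring_nf
      _ ≤ _ := by gcongr; linarith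
  · have hlog : |log a| ≤ a ^ ε / ε := by
      rw [abs_of_nonneg (log_nonneg ha1)]
      exact log_le_rpow_div ha.le hε
    calc a ^ q * |log a| ≤ a ^ (p + ε) * (a ^ ε / ε) :=
          mul_le_mul (rpow_le_rpow_of_exponent_le ha1 (by linarith)) hlog (abs_nonneg _)
            (rpow_nonneg ha.le _)
      _ = a ^ (p + 2 * ε) / ε := by rw [mul_div_assoc', ← rpow_add ha]; ring_nf
      _ ≤ _ := by gcongr; linarith

end Real

theorem HasDerivAt.rpow_one_div {F : ℝ → ℝ} {F' p : ℝ} (hF : HasDerivAt F F' p)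
    (hFp : 0 < F p) (hp : p ≠ 0) :
    HasDerivAt (fun q => F q ^ (1 / q))
      (F p ^ (1 / p) * (-(1 / p ^ 2) * Real.log (F p) + 1 / p * F' / F p)) p := by
  have hinv : HasDerivAt (fun q : ℝ => 1 / q) (-(1 / p ^ 2)) p := by
    simpa only [one_div] using hasDerivAt_inv hp
  convert hF.rpow hinv hFp using 1
  rw [rpow_sub hFp, rpow_one]
  field_simp
  ring

namespace SchwartzMap

variable {E F : Type*} [NormedAddCommGroup E] [NormedSpace ℝ E] [NormedAddCommGroup F]
  [NormedSpace ℝ F] [MeasurableSpace E] [OpensMeasurableSpace E]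
  [SecondCountableTopologyEither E F]
  {μ : Measure E} [μ.HasTemperateGrowth]

theorem integrable_norm_rpow (f : 𝓢(E, F)) {r : ℝ} (hr : 0 < r) :
    Integrable (fun x => ‖f x‖ ^ r) μ := by
  simpa only [ENNReal.toReal_ofReal hr.le] using
    (f.memLp (ENNReal.ofReal r) μ).integrable_norm_rpow (by simpa using hr) ENNReal.ofReal_ne_top

theorem integral_norm_rpow_pos [μ.IsOpenPosMeasure] {f : 𝓢(E, F)} (hf : f ≠ 0) {r : ℝ}
    (hr : 0 < r) : 0 < ∫ x, ‖f x‖ ^ r ∂μ := by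
  rw [integral_pos_iff_support_of_nonneg (fun x => rpow_nonneg (norm_nonneg _) r)
    (f.integrable_norm_rpow hr)]
  obtain ⟨x₀, hx₀⟩ : ∃ x, f x ≠ 0 := by
    by_contra! h
    exact hf (SchwartzMap.ext h)
  have hsupport : {x | f x ≠ 0} ⊆ Function.support fun x => ‖f x‖ ^ r :=
    fun x hx => (rpow_pos_of_pos (norm_pos_iff.mpr hx) r).ne'
  exact ((isOpen_ne_fun f.continuous continuous_const).measure_pos μ ⟨x₀, hx₀⟩).trans_le
    (measure_mono hsupport)

theorem hasDerivAt_integral_norm_rpow (f : 𝓢(E, F)) {p : ℝ} (hp : 0 < p) :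
    HasDerivAt (fun q => ∫ x, ‖f x‖ ^ q ∂μ) (∫ x, ‖f x‖ ^ p * log ‖f x‖ ∂μ) p := by
  have hmeas : ∀ q : ℝ, AEStronglyMeasurable (fun x => ‖f x‖ ^ q) μ := fun q =>
    (f.continuous.norm.measurable.pow_const q).aestronglyMeasurable
  have hε : 0 < p / 4 := by positivity
  refine (hasDerivAt_integral_of_dominated_loc_of_deriv_le
    (F := fun q x => ‖f x‖ ^ q) (F' := fun q x => ‖f x‖ ^ q * log ‖f x‖)
    (bound := fun x => (‖f x‖ ^ (p - 2 * (p / 4)) + ‖f x‖ ^ (p + 2 * (p / 4))) / (p / 4))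
    (Metric.closedBall_mem_nhds p hε) (.of_forall hmeas) (f.integrable_norm_rpow hp)
    ((hmeas p).mul (measurable_log.comp f.continuous.norm.measurable).aestronglyMeasurable)
    (.of_forall fun x q hq => ?_) ?_ (.of_forall fun x q hq => ?_)).2
  · rw [Real.norm_eq_abs]
    exact abs_rpow_mul_log_le (norm_nonneg _) hε hq
  · exact ((f.integrable_norm_rpow (by linarith)).add
      (f.integrable_norm_rpow (by linarith))).div_const _
  · have hq' := abs_le.mp (Metric.mem_closedBall.mp hq)
    exact hasDerivAt_const_rpow_of_nonneg (norm_nonneg _) (by linarith [hq'.1])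

end SchwartzMap

theorem deriv_Lp_norm_in_p_general {d : ℕ}
    (f : SchwartzMap (EuclideanSpace ℝ (Fin d)) ℂ) (hf0 : f ≠ 0)
    (p : ℝ) (hp : 1 ≤ p) :
    HasDerivAt (fun q : ℝ => (∫ x, ‖f x‖ ^ q) ^ (1 / q))
      ((∫ x, ‖f x‖ ^ p) ^ (1 / p) *
        (-(1 / p ^ 2) * Real.log (((∫ x, ‖f x‖ ^ p) ^ (1 / p)) ^ p)
          + (1 / p) * (∫ x, ‖f x‖ ^ p * Real.log ‖f x‖)
              / ((∫ x, ‖f x‖ ^ p) ^ (1 / p)) ^ p)) p := by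
  have hp0 : 0 < p := by linarith
  have hpos : 0 < ∫ x, ‖f x‖ ^ p := SchwartzMap.integral_norm_rpow_pos hf0 hp0
  have hroot : ((∫ x, ‖f x‖ ^ p) ^ (1 / p)) ^ p = ∫ x, ‖f x‖ ^ p := by
    rw [← rpow_mul hpos.le, one_div_mul_cancel hp0.ne', rpow_one]
  rw [hroot]
  exact (f.hasDerivAt_integral_norm_rpow (μ := volume) hp0).rpow_one_div hpos hp0.ne'

/-- For `p ≥ 1` and a nonzero Schwartz function `f` on `ℝ^d`, the derivative of
`p ↦ ‖f‖_{L^p} = (∫ ‖f‖^p)^{1/p}` equals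
`‖f‖_p * ( -(1/p²) log(‖f‖_p^p) + (1/p) (∫ ‖f‖^p log ‖f‖) / ‖f‖_p^p )`. -/
theorem deriv_Lp_norm_in_p {d : ℕ} (hd : 0 < d)
    (f : SchwartzMap (EuclideanSpace ℝ (Fin d)) ℂ) (hf0 : f ≠ 0)
    (p : ℝ) (hp : 1 ≤ p) :
    HasDerivAt (fun q : ℝ => (∫ x, ‖f x‖ ^ q) ^ (1 / q))
      ((∫ x, ‖f x‖ ^ p) ^ (1 / p) *
        (-(1 / p ^ 2) * Real.log (((∫ x, ‖f x‖ ^ p) ^ (1 / p)) ^ p)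
          + (1 / p) * (∫ x, ‖f x‖ ^ p * Real.log ‖f x‖)
              / ((∫ x, ‖f x‖ ^ p) ^ (1 / p)) ^ p)) p :=
  deriv_Lp_norm_in_p_general f hf0 p hp
end
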